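/- arXiv:2502.07520 — 2 statements merged into one kernel-verified Lean document; each statement's English description precedes it below -/
import Mathlib

section
/- For every integer p ≥ 1 and every integer n ≥ 0, the number of edges of the Fibonacci p-cube Γ^p_n equals Σ_{i=1}^{n} F^p_i · F^p_{n−i+1}. -/
/-- Fibonacci `p`-numbers: `F^p_0 = 0`, `F^p_m = 1` for `1 ≤ m ≤ p`,
and `F^p_m = F^p_{m-1} + F^p_{m-p-1}` for `m ≥ p+1`. -/
def fibP (p : ℕ) : ℕ → ℕ
  | 0 => 0
  | m + 1 => if m + 1 ≤ p then 1 else fibP p m + fibP p (m - p)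

/-- A Fibonacci `p`-string of length `n`: any two `1`s are separated by at least `p` `0`s. -/
def IsFibStr (p : ℕ) {n : ℕ} (u : Fin n → Bool) : Prop :=
  ∀ i j : Fin n, u i = true → u j = true → (i : ℕ) < (j : ℕ) → (i : ℕ) + p + 1 ≤ (j : ℕ)

instance (p n : ℕ) : DecidablePred fun u : Fin n → Bool => IsFibStr p u := fun u =>
  decidable_of_iff
    (∀ i j : Fin n, u i = true → u j = true → (i : ℕ) < (j : ℕ) → (i : ℕ) + p + 1 ≤ (j : ℕ))
    Iff.rfl

/-- Hamming weight of a binary string. -/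
def wt {n : ℕ} (u : Fin n → Bool) : ℕ := (Finset.univ.filter fun i => u i = true).card

/-- The Fibonacci `p`-cube `Γ^p_n`. -/
def FibCube (p n : ℕ) : SimpleGraph {u : Fin n → Bool // IsFibStr p u} where
  Adj u v := (Finset.univ.filter fun i => u.1 i ≠ v.1 i).card = 1
  symm := by
    constructor
    intro u v h
    beta_reduce at h ⊢
    have : (Finset.univ.filter fun i => v.1 i ≠ u.1 i)
        = (Finset.univ.filter fun i => u.1 i ≠ v.1 i) := by
      apply Finset.filter_congr
      intro i _
      simp [ne_comm]
    rw [this]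
    exact h
  loopless := by constructor; intro u h; simp at h

instance (p n : ℕ) : DecidableRel (FibCube p n).Adj := fun u v =>
  decidable_of_iff ((Finset.univ.filter fun i => u.1 i ≠ v.1 i).card = 1) Iff.rfl

/-- `c_k(Γ^p_n)`: induced `Q_k`-subgraphs, encoded as pairs (bottom, top). -/
noncomputable def cubeCount (p n k : ℕ) : ℕ :=
  Nat.card {bt : (Fin n → Bool) × (Fin n → Bool) //
    IsFibStr p bt.1 ∧ IsFibStr p bt.2 ∧ (∀ i, bt.1 i = true → bt.2 i = true) ∧
    (Finset.univ.filter fun i => bt.1 i ≠ bt.2 i).card = k}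

/-- `c_{k,d}(Γ^p_n)`: induced `Q_k`-subgraphs with bottom vertex of weight `d`. -/
noncomputable def cubeCountD (p n k d : ℕ) : ℕ :=
  Nat.card {bt : (Fin n → Bool) × (Fin n → Bool) //
    IsFibStr p bt.1 ∧ IsFibStr p bt.2 ∧ (∀ i, bt.1 i = true → bt.2 i = true) ∧
    (Finset.univ.filter fun i => bt.1 i ≠ bt.2 i).card = k ∧ wt bt.1 = d}

/-- Weight enumerator polynomial of `Γ^p_n`. -/
noncomputable def weightPoly (p n : ℕ) : Polynomial ℤ :=
  ∑ u : {u : Fin n → Bool // IsFibStr p u}, Polynomial.X ^ wt u.1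

/-- Distance cube polynomial of `Γ^p_n`, in variables `X 0 = x` and `X 1 = q`. -/
noncomputable def distCubePoly (p n : ℕ) : MvPolynomial (Fin 2) ℤ :=
  ∑ k ∈ Finset.range (n + 1), ∑ d ∈ Finset.range (n + 1),
    (cubeCountD p n k d : MvPolynomial (Fin 2) ℤ) *
      MvPolynomial.X 0 ^ k * MvPolynomial.X 1 ^ d

/-- Flip coordinate `j` of a binary string (`u + δ_j`). -/
def flipCoord {n : ℕ} (u : Fin n → Bool) (j : Fin n) : Fin n → Bool :=
  Function.update u j (!u j)
section FibAux

open Finset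

/-- Count of Fibonacci `p`-strings of length `n`. -/
def fibCount (p n : ℕ) : ℕ := Fintype.card {u : Fin n → Bool // IsFibStr p u}

lemma fibP_eq_one {p m : ℕ} (h1 : 1 ≤ m) (h2 : m ≤ p) : fibP p m = 1 := by
  cases m with
  | zero => omega
  | succ k => rw [fibP, if_pos h2]

lemma fibP_succ {p m : ℕ} (h : p < m + 1) : fibP p (m + 1) = fibP p m + fibP p (m - p) := by
  rw [fibP, if_neg (by omega)]

lemma fibP_zero (p : ℕ) : fibP p 0 = 0 := by rw [fibP]

lemma fibCount_zero (p : ℕ) : fibCount p 0 = 1 := by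
  rw [fibCount, Fintype.card_eq_one_iff]
  refine ⟨⟨fun i => i.elim0, fun i => i.elim0⟩, fun b => Subtype.ext (funext fun i => i.elim0)⟩

/-- The key splitting equivalence: Fibonacci strings with a `1` at position `j`
correspond to pairs of a left and a right Fibonacci string. -/
def splitEquiv (p n : ℕ) (j : Fin n) :
    {u : Fin n → Bool // IsFibStr p u ∧ u j = true} ≃
      {a : Fin ((j : ℕ) - p) → Bool // IsFibStr p a} ×
        {b : Fin (n - 1 - (j : ℕ) - p) → Bool // IsFibStr p b} where
  toFun u :=
    (⟨fun i => u.1 ⟨(i : ℕ), by have := i.isLt; have := j.isLt; omega⟩, by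
        intro i1 i2 h1 h2 hlt
        exact u.2.1 _ _ h1 h2 hlt⟩,
     ⟨fun i => u.1 ⟨(i : ℕ) + (j : ℕ) + p + 1, by have := i.isLt; omega⟩, by
        intro i1 i2 h1 h2 hlt
        have key : (i1 : ℕ) + (j : ℕ) + p + 1 + p + 1 ≤ (i2 : ℕ) + (j : ℕ) + p + 1 :=
          u.2.1 _ _ h1 h2 (show (i1 : ℕ) + (j : ℕ) + p + 1 < (i2 : ℕ) + (j : ℕ) + p + 1 by omega)
        omega⟩)
  invFun ab :=
    ⟨fun i =>
      if h1 : (i : ℕ) < (j : ℕ) - p then ab.1.1 ⟨(i : ℕ), h1⟩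
      else if (i : ℕ) = (j : ℕ) then true
      else if h2 : (j : ℕ) + p + 1 ≤ (i : ℕ) then
        ab.2.1 ⟨(i : ℕ) - ((j : ℕ) + p + 1), by have := i.isLt; omega⟩
      else false, by
      constructor
      · intro i1 i2 h1 h2 hlt
        simp only [] at h1 h2
        split_ifs at h1 h2 with c1 c2 c3 c4 c5 c6
        all_goals first
          | omega
          | simp at h1
          | simp at h2
          | exact ab.1.2 _ _ h1 h2 hlt
          | (have key : (i1 : ℕ) - ((j : ℕ) + p + 1) + p + 1 ≤ (i2 : ℕ) - ((j : ℕ) + p + 1) :=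
              ab.2.2 _ _ h1 h2
                (show (i1 : ℕ) - ((j : ℕ) + p + 1) < (i2 : ℕ) - ((j : ℕ) + p + 1) by omega)
             omega)
      · simp only []
        rw [dif_neg (show ¬ ((j : ℕ) < (j : ℕ) - p) by omega)]
        simp⟩
  left_inv := by
    intro u
    apply Subtype.ext
    funext i
    dsimp only
    split_ifs with c1 c2 c3
    · rfl
    · have hij : i = j := Fin.ext c2
      rw [hij, u.2.2]
    · exact congrArg u.1 (Fin.ext
        (show (i : ℕ) - ((j : ℕ) + p + 1) + (j : ℕ) + p + 1 = (i : ℕ) by omega))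
    · symm
      by_contra hne
      rw [Bool.not_eq_false] at hne
      rcases Nat.lt_or_ge (i : ℕ) (j : ℕ) with h | h
      · have := u.2.1 i j hne u.2.2 h
        omega
      · have hj : (j : ℕ) < (i : ℕ) := by omega
        have := u.2.1 j i u.2.2 hne hj
        omega
  right_inv := by
    intro ab
    refine Prod.ext (Subtype.ext (funext fun i => ?_)) (Subtype.ext (funext fun i => ?_))
    · dsimp only
      split_ifs with c1 c2 c3
      · rfl
      · exact absurd i.isLt c1
      · exact absurd i.isLt c1
      · exact absurd i.isLt c1
    · dsimp only
      split_ifs with c1 c2 c3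
      · have c1' : (i : ℕ) + (j : ℕ) + p + 1 < (j : ℕ) - p := c1
        omega
      · have c2' : (i : ℕ) + (j : ℕ) + p + 1 = (j : ℕ) := c2
        omega
      · exact congrArg ab.2.1 (Fin.ext
          (show (i : ℕ) + (j : ℕ) + p + 1 - ((j : ℕ) + p + 1) = (i : ℕ) by omega))
      · have c3' : ¬ ((j : ℕ) + p + 1 ≤ (i : ℕ) + (j : ℕ) + p + 1) := c3
        omega

/-- Prepending a `0` to a Fibonacci string. -/
def consEquiv (p n : ℕ) :
    {u : Fin n → Bool // IsFibStr p u} ≃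
      {u : Fin (n + 1) → Bool // IsFibStr p u ∧ u 0 = false} where
  toFun v :=
    ⟨fun i => if h : 0 < (i : ℕ) then v.1 ⟨(i : ℕ) - 1, by have := i.isLt; omega⟩ else false, by
      constructor
      · intro i1 i2 h1 h2 hlt
        simp only [] at h1 h2
        split_ifs at h1 h2 with c1 c2
        all_goals first
          | simp at h1
          | simp at h2
          | (have key : (i1 : ℕ) - 1 + p + 1 ≤ (i2 : ℕ) - 1 :=
              v.2 _ _ h1 h2 (show (i1 : ℕ) - 1 < (i2 : ℕ) - 1 by omega)
             omega)
      · simp⟩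
  invFun u :=
    ⟨fun i => u.1 ⟨(i : ℕ) + 1, by have := i.isLt; omega⟩, by
      intro i1 i2 h1 h2 hlt
      have key : (i1 : ℕ) + 1 + p + 1 ≤ (i2 : ℕ) + 1 :=
        u.2.1 _ _ h1 h2 (show (i1 : ℕ) + 1 < (i2 : ℕ) + 1 by omega)
      omega⟩
  left_inv := by
    intro v
    apply Subtype.ext
    funext i
    dsimp only
    split_ifs with c
    · rfl
    · have c' : ¬ (0 < (i : ℕ) + 1) := c
      omega
  right_inv := by
    intro u
    apply Subtype.ext
    funext i
    dsimp only
    split_ifs with c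
    · exact congrArg u.1 (Fin.ext (show (i : ℕ) - 1 + 1 = (i : ℕ) by omega))
    · have hi : i = 0 := Fin.ext (by rw [Fin.val_zero]; omega)
      rw [hi, u.2.2]

lemma fibCount_succ (p n : ℕ) :
    fibCount p (n + 1) = fibCount p n + fibCount p (n - p) := by
  classical
  have hsplit := Finset.card_filter_add_card_filter_not
    (s := Finset.univ.filter fun u : Fin (n + 1) → Bool => IsFibStr p u)
    (p := fun u => u 0 = true)
  rw [Finset.filter_filter, Finset.filter_filter] at hsplit
  have htrue : (Finset.univ.filter fun u : Fin (n + 1) → Bool =>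
      IsFibStr p u ∧ u 0 = true).card = fibCount p (n - p) := by
    rw [← Fintype.card_subtype]
    rw [Fintype.card_congr (splitEquiv p (n + 1) 0), Fintype.card_prod]
    have e1 : Fintype.card
        {a : Fin (((0 : Fin (n + 1)) : ℕ) - p) → Bool // IsFibStr p a} =
        fibCount p (((0 : Fin (n + 1)) : ℕ) - p) := rfl
    have e2 : Fintype.card
        {b : Fin (n + 1 - 1 - ((0 : Fin (n + 1)) : ℕ) - p) → Bool // IsFibStr p b} =
        fibCount p (n + 1 - 1 - ((0 : Fin (n + 1)) : ℕ) - p) := rfl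
    rw [e1, e2, show (((0 : Fin (n + 1)) : ℕ) - p) = 0 by simp,
      show (n + 1 - 1 - ((0 : Fin (n + 1)) : ℕ) - p) = n - p by simp,
      fibCount_zero, one_mul]
  have hfalse : (Finset.univ.filter fun u : Fin (n + 1) → Bool =>
      IsFibStr p u ∧ ¬ u 0 = true).card = fibCount p n := by
    rw [← Fintype.card_subtype]
    rw [fibCount, Fintype.card_congr (consEquiv p n)]
    apply Fintype.card_congr
    exact Equiv.subtypeEquivRight (fun u => by simp [Bool.not_eq_true])
  rw [htrue, hfalse] at hsplit
  rw [fibCount, Fintype.card_subtype, ← hsplit]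
  exact Nat.add_comm _ _

lemma fibCount_eq_fibP {p : ℕ} (hp : 1 ≤ p) : ∀ n, fibCount p n = fibP p (n + p + 1) := by
  intro n
  induction n using Nat.strong_induction_on with
  | _ n ih =>
    match n with
    | 0 =>
      rw [fibCount_zero, show 0 + p + 1 = p + 1 by omega, fibP_succ (by omega),
        Nat.sub_self, fibP_eq_one hp le_rfl, fibP_zero]
    | Nat.succ k =>
      rw [fibCount_succ, ih k (by omega)]
      have hk : fibCount p (k - p) = fibP p (k + 1) := by
        rcases le_or_gt p k with h | h
        · rw [ih (k - p) (by omega)]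
          congr 1
          omega
        · rw [show k - p = 0 by omega, fibCount_zero, fibP_eq_one (by omega) (by omega)]
      have hr : fibP p (k + 1 + p + 1) = fibP p (k + p + 1) + fibP p (k + 1) := by
        rw [show k + 1 + p + 1 = (k + p + 1) + 1 by omega, fibP_succ (by omega)]
        congr 2
        omega
      rw [hk, hr]

lemma card_coord {p : ℕ} (hp : 1 ≤ p) (n : ℕ) (j : Fin n) :
    Fintype.card {u : Fin n → Bool // IsFibStr p u ∧ u j = true} =
      fibP p ((j : ℕ) + 1) * fibP p (n - (j : ℕ)) := by
  rw [Fintype.card_congr (splitEquiv p n j), Fintype.card_prod]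
  have h1 : Fintype.card {a : Fin ((j : ℕ) - p) → Bool // IsFibStr p a} =
      fibP p ((j : ℕ) + 1) := by
    have e1 : Fintype.card {a : Fin ((j : ℕ) - p) → Bool // IsFibStr p a} =
        fibCount p ((j : ℕ) - p) := rfl
    rcases le_or_gt p (j : ℕ) with h | h
    · rw [e1, fibCount_eq_fibP hp]
      congr 1
      omega
    · rw [e1, show ((j : ℕ) - p) = 0 by omega, fibCount_zero,
        fibP_eq_one (by omega) (by omega)]
  have h2 : Fintype.card {b : Fin (n - 1 - (j : ℕ) - p) → Bool // IsFibStr p b} =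
      fibP p (n - (j : ℕ)) := by
    have hjn := j.isLt
    have e2 : Fintype.card {b : Fin (n - 1 - (j : ℕ) - p) → Bool // IsFibStr p b} =
        fibCount p (n - 1 - (j : ℕ) - p) := rfl
    rcases le_or_gt ((j : ℕ) + p) (n - 1) with h | h
    · rw [e2, fibCount_eq_fibP hp]
      congr 1
      omega
    · rw [e2, show (n - 1 - (j : ℕ) - p) = 0 by omega, fibCount_zero,
        fibP_eq_one (by omega) (by omega)]
  rw [h1, h2]

lemma flip_isFibStr {p n : ℕ} {u : Fin n → Bool} (hu : IsFibStr p u) (j : Fin n)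
    (hj : u j = true) : IsFibStr p (flipCoord u j) := by
  intro i1 i2 h1 h2 hlt
  simp only [flipCoord, Function.update_apply] at h1 h2
  split_ifs at h1 h2 with c1 c2
  all_goals first
    | (rw [hj] at h1; simp at h1)
    | (rw [hj] at h2; simp at h2)
    | exact hu _ _ h1 h2 hlt

lemma flip_adj {p n : ℕ} (u : {u : Fin n → Bool // IsFibStr p u}) (j : Fin n)
    (hj : u.1 j = true) :
    (FibCube p n).Adj u ⟨flipCoord u.1 j, flip_isFibStr u.2 j hj⟩ := by
  show (Finset.univ.filter fun i => u.1 i ≠ flipCoord u.1 j i).card = 1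
  have hset : (Finset.univ.filter fun i => u.1 i ≠ flipCoord u.1 j i) = {j} := by
    ext i
    simp only [Finset.mem_filter, Finset.mem_univ, true_and, Finset.mem_singleton,
      flipCoord, Function.update_apply]
    constructor
    · intro h
      by_contra hne
      rw [if_neg hne] at h
      exact h rfl
    · rintro rfl
      rw [if_pos rfl, hj]
      simp
  rw [hset, Finset.card_singleton]

/-- The set of pairs (vertex, coordinate where it is `1`). -/
abbrev UpPairs (p n : ℕ) :=
  {x : {u : Fin n → Bool // IsFibStr p u} × Fin n // x.1.1 x.2 = true}

def toEdge (p n : ℕ) (x : UpPairs p n) : (FibCube p n).edgeSet :=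
  ⟨s(x.1.1, ⟨flipCoord x.1.1.1 x.1.2, flip_isFibStr x.1.1.2 x.1.2 x.2⟩),
    (SimpleGraph.mem_edgeSet _).mpr (flip_adj x.1.1 x.1.2 x.2)⟩

lemma toEdge_bijective (p n : ℕ) : Function.Bijective (toEdge p n) := by
  constructor
  · rintro ⟨⟨u, j⟩, hx⟩ ⟨⟨v, k⟩, hy⟩ h
    have hx' : u.1 j = true := hx
    have hy' : v.1 k = true := hy
    have h2 := congrArg Subtype.val h
    rcases Sym2.eq_iff.mp h2 with ⟨h3, h4⟩ | ⟨h3, h4⟩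
    · subst h3
      have hf : flipCoord u.1 j = flipCoord u.1 k := congrArg Subtype.val h4
      have hjk : j = k := by
        by_contra hne
        have hfj := congrFun hf j
        simp [flipCoord, Function.update_apply, hne, hx'] at hfj
      subst hjk
      rfl
    · exfalso
      have e1 : u.1 = flipCoord v.1 k := congrArg Subtype.val h3
      have e2 : flipCoord u.1 j = v.1 := congrArg Subtype.val h4
      by_cases hkj : k = j
      · subst hkj
        have t := congrFun e2 k
        simp [flipCoord, Function.update_apply, hx', hy'] at t
      · have t1 := congrFun e2 k
        simp only [flipCoord, Function.update_apply, if_neg hkj] at t1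
        have t2 := congrFun e1 k
        simp only [flipCoord, Function.update_apply, if_pos rfl] at t2
        rw [hy'] at t1 t2
        rw [t1] at t2
        simp at t2
  · rintro ⟨e, he⟩
    revert he
    refine Sym2.inductionOn e (fun a b => ?_)
    intro he
    have hab : (FibCube p n).Adj a b := (SimpleGraph.mem_edgeSet _).mp he
    have hcard : (Finset.univ.filter fun i => a.1 i ≠ b.1 i).card = 1 := hab
    obtain ⟨j, hj⟩ := Finset.card_eq_one.mp hcard
    have hne : a.1 j ≠ b.1 j := by
      have : j ∈ Finset.univ.filter fun i => a.1 i ≠ b.1 i := by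
        rw [hj]; exact Finset.mem_singleton_self j
      exact (Finset.mem_filter.mp this).2
    have heq : ∀ i, i ≠ j → a.1 i = b.1 i := by
      intro i hi
      by_contra hcon
      have : i ∈ Finset.univ.filter fun i => a.1 i ≠ b.1 i :=
        Finset.mem_filter.mpr ⟨Finset.mem_univ _, hcon⟩
      rw [hj, Finset.mem_singleton] at this
      exact hi this
    cases haj : a.1 j with
    | true =>
      refine ⟨⟨(a, j), haj⟩, Subtype.ext ?_⟩
      show s(a, _) = s(a, b)
      have hflip : (⟨flipCoord a.1 j, flip_isFibStr a.2 j haj⟩ :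
          {u : Fin n → Bool // IsFibStr p u}) = b := by
        apply Subtype.ext
        funext i
        by_cases hi : i = j
        · subst hi
          have hbj : b.1 i = false := by
            cases hbj : b.1 i
            · rfl
            · rw [haj, hbj] at hne; exact absurd rfl hne
          simp [flipCoord, Function.update_apply, haj, hbj]
        · simp only [flipCoord, Function.update_apply, if_neg hi]
          exact heq i hi
      rw [hflip]
    | false =>
      have hbj : b.1 j = true := by
        cases hbj : b.1 j
        · rw [haj, hbj] at hne; exact absurd rfl hne
        · rfl
      refine ⟨⟨(b, j), hbj⟩, Subtype.ext ?_⟩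
      show s(b, _) = s(a, b)
      have hflip : (⟨flipCoord b.1 j, flip_isFibStr b.2 j hbj⟩ :
          {u : Fin n → Bool // IsFibStr p u}) = a := by
        apply Subtype.ext
        funext i
        by_cases hi : i = j
        · subst hi
          have haj' : a.1 i = false := by
            cases haj' : a.1 i
            · rfl
            · rw [haj', hbj] at hne; exact absurd rfl hne
          simp [flipCoord, Function.update_apply, hbj, haj']
        · simp only [flipCoord, Function.update_apply, if_neg hi]
          exact (heq i hi).symm
      rw [hflip, Sym2.eq_swap]

def sigmaEquiv (p n : ℕ) :
    UpPairs p n ≃ Σ j : Fin n, {u : Fin n → Bool // IsFibStr p u ∧ u j = true} where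
  toFun x := ⟨x.1.2, ⟨x.1.1.1, x.1.1.2, x.2⟩⟩
  invFun y := ⟨(⟨y.2.1, y.2.2.1⟩, y.1), y.2.2.2⟩
  left_inv x := rfl
  right_inv y := rfl

end FibAux
/-- The size of `Γ^p_n` is `Σ_{i=1}^n F^p_i · F^p_{n-i+1}`. -/
theorem fibCube_size (p n : ℕ) (hp : 1 ≤ p) :
    Nat.card (FibCube p n).edgeSet = ∑ i ∈ Finset.Icc 1 n, fibP p i * fibP p (n - i + 1) := by
  classical
  rw [← Nat.card_eq_of_bijective (toEdge p n) (toEdge_bijective p n)]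
  rw [Nat.card_eq_fintype_card, Fintype.card_congr (sigmaEquiv p n), Fintype.card_sigma]
  rw [Finset.sum_congr rfl (fun j _ => card_coord hp n j)]
  rw [Fin.sum_univ_eq_sum_range (fun j => fibP p (j + 1) * fibP p (n - j))]
  rw [show Finset.Icc 1 n = Finset.Ico 1 (n + 1) by rw [Finset.Ico_add_one_right_eq_Icc],
    Finset.sum_Ico_eq_sum_range]
  apply Finset.sum_congr rfl
  intro i hi
  have hi' : i < n + 1 - 1 := Finset.mem_range.mp hi
  congr 1
  · congr 1
    omega
  · congr 1
    omega
end

section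
/- For every integer p ≥ 1 and all integers n ≥ 0 and k ≥ 0, the number c_k(Γ^p_n) of induced subgraphs of the Fibonacci p-cube Γ^p_n isomorphic to the hypercube Q_k equals the sum, over all (k+1)-tuples (i_0, i_1, …, i_k) of nonnegative integers with i_0 + i_1 + ⋯ + i_k = n − kp + p + 1, of the products F^p_{i_0} · F^p_{i_1} ⋯ F^p_{i_k} (the empty sum being 0 when n − kp + p + 1 < 0). -/
namespace FibConvAux

lemma fibP_zero (p : ℕ) : fibP p 0 = 0 := by rw [fibP]

lemma fibP_succ (p m : ℕ) :
    fibP p (m + 1) = if m + 1 ≤ p then 1 else fibP p m + fibP p (m - p) := by rw [fibP]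

lemma fibP_eq_one {p m : ℕ} (hp : 1 ≤ p) (h1 : 1 ≤ m) (h2 : m ≤ p + 1) : fibP p m = 1 := by
  obtain ⟨m, rfl⟩ := Nat.exists_eq_add_of_le h1
  rw [Nat.add_comm, fibP_succ]
  rcases le_or_gt (m + 1) p with h | h
  · simp [h]
  · rw [if_neg (by omega)]
    have h1 : fibP p m = 1 := by
      have hmp : m = p := by omega
      subst hmp
      obtain ⟨q, rfl⟩ := Nat.exists_eq_add_of_le hp
      rw [Nat.add_comm 1 q, fibP_succ, if_pos (by omega)]
    have h2 : m - p = 0 := by omega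
    rw [h1, h2, fibP_zero]

lemma fibP_step {p : ℕ} (hp : 1 ≤ p) (m : ℕ) :
    fibP p (m + 1) = (if m = 0 then 1 else 0) + fibP p m + (if p ≤ m then fibP p (m - p) else 0) := by
  rcases Nat.eq_zero_or_pos m with rfl | hm
  · simp [fibP_eq_one hp le_rfl (by omega), fibP_zero, show ¬ (p ≤ 0) by omega]
  rw [fibP_succ]
  rcases le_or_gt (m + 1) p with h | h
  · rw [if_pos h, if_neg (by omega), if_neg (by omega), fibP_eq_one hp hm (by omega)]
  · rw [if_neg (by omega), if_neg (by omega), if_pos (by omega)]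
    omega

/-- `C p m N` : convolution sum. -/
def C (p m N : ℕ) : ℕ := ∑ t ∈ Finset.Nat.antidiagonalTuple m N, ∏ j, fibP p (t j)

lemma C_zero_succ (p N : ℕ) : C p 0 (N + 1) = 0 := by
  simp [C, Finset.Nat.antidiagonalTuple_zero_succ]

lemma C_one (p N : ℕ) : C p 1 N = fibP p N := by
  simp [C, Finset.Nat.antidiagonalTuple_one]

lemma C_eq_zero {p m N : ℕ} (h : N < m) : C p m N = 0 := by
  apply Finset.sum_eq_zero
  intro t ht
  rw [Finset.Nat.mem_antidiagonalTuple] at ht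
  have : ∃ j, t j = 0 := by
    by_contra hall
    push_neg at hall
    have : m ≤ ∑ j, t j := by
      calc m = ∑ _j : Fin m, 1 := by simp
        _ ≤ ∑ j, t j := Finset.sum_le_sum fun j _ => Nat.one_le_iff_ne_zero.2 (hall j)
    omega
  obtain ⟨j, hj⟩ := this
  apply Finset.prod_eq_zero (Finset.mem_univ j)
  rw [hj, fibP_zero]

lemma C_succ (p m N : ℕ) :
    C p (m + 1) N = ∑ ab ∈ Finset.HasAntidiagonal.antidiagonal N, fibP p ab.1 * C p m ab.2 := by
  simp only [C, Finset.mul_sum]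
  rw [Finset.sum_sigma']
  apply Finset.sum_nbij' (i := fun t => ⟨(t 0, ∑ j, Fin.tail t j), Fin.tail t⟩)
    (j := fun x => Fin.cons x.1.1 x.2)
  · intro t ht
    rw [Finset.Nat.mem_antidiagonalTuple] at ht
    rw [Finset.mem_sigma, Finset.HasAntidiagonal.mem_antidiagonal, Finset.Nat.mem_antidiagonalTuple]
    constructor
    · rw [← ht, Fin.sum_univ_succ]
      rfl
    · rfl
  · intro x hx
    rw [Finset.mem_sigma, Finset.HasAntidiagonal.mem_antidiagonal, Finset.Nat.mem_antidiagonalTuple] at hx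
    rw [Finset.Nat.mem_antidiagonalTuple, Fin.sum_univ_succ, Fin.cons_zero]
    simp only [Fin.cons_succ]
    rw [hx.2, hx.1]
  · intro t ht
    exact Fin.cons_self_tail t
  · intro x hx
    rw [Finset.mem_sigma, Finset.HasAntidiagonal.mem_antidiagonal, Finset.Nat.mem_antidiagonalTuple] at hx
    refine Sigma.ext ?_ ?_
    · simp only [Fin.cons_zero, Fin.tail_cons]
      exact Prod.ext rfl hx.2
    · simp only [Fin.tail_cons]
      exact HEq.rfl
  · intro t ht
    rw [Fin.prod_univ_succ]
    rfl

lemma sum_antidiagonal_shift (p N : ℕ) (f g : ℕ → ℕ) :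
    ∑ ab ∈ Finset.HasAntidiagonal.antidiagonal N, (if p ≤ ab.1 then f (ab.1 - p) else 0) * g ab.2
      = if p ≤ N then ∑ ab ∈ Finset.HasAntidiagonal.antidiagonal (N - p), f ab.1 * g ab.2 else 0 := by
  rw [Finset.Nat.sum_antidiagonal_eq_sum_range_succ_mk]
  rcases le_or_gt p N with h | h
  · rw [if_pos h, Finset.Nat.sum_antidiagonal_eq_sum_range_succ_mk]
    simp only [ite_mul, zero_mul]
    rw [← Finset.sum_filter]
    have hf : (Finset.range (N + 1)).filter (fun i => p ≤ i) = Finset.Ico p (N + 1) := by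
      ext i
      simp [Finset.mem_filter, Finset.mem_range, Finset.mem_Ico]
      omega
    rw [hf, Finset.sum_Ico_eq_sum_range]
    have hl : N + 1 - p = N - p + 1 := by omega
    rw [hl]
    apply Finset.sum_congr rfl
    intro i hi
    rw [Finset.mem_range] at hi
    congr 1
    · congr 1
      omega
    · congr 1
      omega
  · rw [if_neg (by omega)]
    apply Finset.sum_eq_zero
    intro i hi
    rw [Finset.mem_range] at hi
    rw [if_neg (by omega), zero_mul]

lemma C_rec {p : ℕ} (hp : 1 ≤ p) (m N : ℕ) :
    C p (m + 1) (N + 1) =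
      C p m N + C p (m + 1) N + (if p ≤ N then C p (m + 1) (N - p) else 0) := by
  rw [C_succ, Finset.Nat.sum_antidiagonal_succ]
  rw [fibP_zero, zero_mul, zero_add]
  have he : ∀ ab : ℕ × ℕ, fibP p (ab.1 + 1) * C p m ab.2
      = (if ab.1 = 0 then C p m ab.2 else 0) + fibP p ab.1 * C p m ab.2
        + (if p ≤ ab.1 then fibP p (ab.1 - p) else 0) * C p m ab.2 := by
    intro ab
    rw [fibP_step hp]
    rw [add_mul, add_mul, ite_mul, one_mul, zero_mul]
  simp only [he]
  rw [Finset.sum_add_distrib, Finset.sum_add_distrib]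
  congr 1
  congr 1
  · rw [Finset.sum_eq_single (0, N)]
    · simp
    · intro b hb hne
      rw [Finset.HasAntidiagonal.mem_antidiagonal] at hb
      rw [if_neg]
      intro h0
      apply hne
      have : b.2 = N := by omega
      exact Prod.ext h0 this
    · intro h
      exact absurd (Finset.HasAntidiagonal.mem_antidiagonal.2 (by omega)) h
  · rw [← C_succ]
  · rw [sum_antidiagonal_shift]
    rcases le_or_gt p N with h | h
    · rw [if_pos h, if_pos h, ← C_succ]
    · rw [if_neg (by omega), if_neg (by omega)]

/-- Count of marked Fibonacci strings of length `n` with `k` marks, with required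
initial gap `g`. -/
def cntG (p : ℕ) : ℕ → ℕ → ℕ → ℕ
  | _, 0, k => if k = 0 then 1 else 0
  | g, n + 1, k =>
      cntG p (g - 1) n k +
        if g = 0 then cntG p p n k + (if k = 0 then 0 else cntG p p n (k - 1)) else 0

lemma cntG_eq {p : ℕ} (hp : 1 ≤ p) :
    ∀ n g k, g ≤ p → cntG p g n k = C p (k + 1) (n + p + 1 - g - k * p) := by
  intro n
  induction n with
  | zero =>
    intro g k hg
    rw [cntG]
    rcases Nat.eq_zero_or_pos k with rfl | hk
    · rw [if_pos rfl, show 0 + p + 1 - g - 0 * p = p + 1 - g by omega, C_one,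
        fibP_eq_one hp (by omega) (by omega)]
    · have hkp : p ≤ k * p := Nat.le_mul_of_pos_left p hk
      rw [if_neg (by omega), C_eq_zero (by omega)]
  | succ n ih =>
    intro g k hg
    rcases Nat.eq_zero_or_pos g with rfl | hgpos
    · -- g = 0
      rw [cntG]
      simp only [Nat.zero_sub, eq_self_iff_true, if_true]
      rw [ih 0 k (by omega), ih p k le_rfl]
      rcases le_or_gt (k * p) (n + p + 1) with hle | hlt
      · -- non-degenerate
        set N := n + p + 1 - k * p with hN
        have hgoal : n + 1 + p + 1 - 0 - k * p = N + 1 := by omega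
        rw [hgoal, C_rec hp]
        have e1 : n + p + 1 - 0 - k * p = N := by omega
        rw [e1]
        rcases Nat.eq_zero_or_pos k with rfl | hk
        · rw [if_pos rfl]
          have h0 : C p 0 N = 0 := by
            rw [show N = (n + p) + 1 by omega]; exact C_zero_succ p (n + p)
          rw [if_pos (show p ≤ N by omega), h0,
            show n + p + 1 - p - 0 * p = n + 1 by omega, show N - p = n + 1 by omega]
          omega
        · have hkp : p ≤ k * p := Nat.le_mul_of_pos_left p hk
          have hk1p : (k - 1) * p = k * p - p := Nat.sub_one_mul _ _
          rw [if_neg (by omega), ih p (k - 1) le_rfl,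
            show k - 1 + 1 = k by omega]
          have e3 : n + p + 1 - p - (k - 1) * p = N := by omega
          rw [e3]
          rcases le_or_gt (k * p) (n + 1) with h2 | h2
          · rw [if_pos (show p ≤ N by omega),
              show N - p = n + p + 1 - p - k * p by omega]
            omega
          · rw [if_neg (show ¬ p ≤ N by omega),
              show n + p + 1 - p - k * p = 0 by omega, C_eq_zero (Nat.succ_pos k)]
            omega
      · -- degenerate : k * p > n + p + 1
        have hk : 1 ≤ k := by
          by_contra hk0
          have : k = 0 := by omega
          subst this
          omega
        have hk1p : (k - 1) * p = k * p - p := Nat.sub_one_mul _ _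
        have hkp : p ≤ k * p := Nat.le_mul_of_pos_left p hk
        rw [if_neg (by omega)]
        rw [ih p (k - 1) le_rfl, show k - 1 + 1 = k by omega]
        rw [show n + 1 + p + 1 - 0 - k * p = 0 by omega,
          show n + p + 1 - 0 - k * p = 0 by omega,
          show n + p + 1 - p - k * p = 0 by omega,
          show n + p + 1 - p - (k - 1) * p = 0 by omega]
        have z1 : C p (k + 1) 0 = 0 := C_eq_zero (by omega)
        have z2 : C p k 0 = 0 := C_eq_zero (by omega)
        rw [z1, z2]
    · -- g ≥ 1
      rw [cntG, if_neg (by omega), add_zero, ih (g - 1) k (by omega)]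
      congr 1
      omega

/-- Number of marks of a marked string. -/
def mct {n : ℕ} (v : Fin n → Option Bool) : ℕ := ∑ i, if v i = some true then 1 else 0

/-- Marked Fibonacci string with initial gap requirement `g`. -/
def mOk (p g : ℕ) {n : ℕ} (v : Fin n → Option Bool) : Prop :=
  (∀ i : Fin n, (v i).isSome = true → g ≤ (i : ℕ)) ∧
  ∀ i j : Fin n, (v i).isSome = true → (v j).isSome = true →
    (i : ℕ) < (j : ℕ) → (i : ℕ) + p + 1 ≤ (j : ℕ)

noncomputable def MN (p g n k : ℕ) : ℕ :=
  Nat.card {v : Fin n → Option Bool // mOk p g v ∧ mct v = k}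

lemma mct_cons {n : ℕ} (a : Option Bool) (v : Fin n → Option Bool) :
    mct (Fin.cons a v) = (if a = some true then 1 else 0) + mct v := by
  rw [mct, Fin.sum_univ_succ, Fin.cons_zero, mct]
  simp only [Fin.cons_succ]

lemma mOk_cons_none {p g n : ℕ} {v : Fin n → Option Bool} :
    mOk p g (Fin.cons none v) ↔ mOk p (g - 1) v := by
  constructor
  · rintro ⟨h1, h2⟩
    constructor
    · intro i hi
      have := h1 i.succ (by simpa using hi)
      simp only [Fin.val_succ] at this
      omega
    · intro i j hi hj hlt
      have := h2 i.succ j.succ (by simpa using hi) (by simpa using hj)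
        (by simp only [Fin.val_succ]; omega)
      simp only [Fin.val_succ] at this
      omega
  · rintro ⟨h1, h2⟩
    constructor
    · intro i hi
      rcases Fin.eq_zero_or_eq_succ i with rfl | ⟨i', rfl⟩
      · simp at hi
      · have := h1 i' (by simpa using hi)
        simp only [Fin.val_succ]
        omega
    · intro i j hi hj hlt
      rcases Fin.eq_zero_or_eq_succ i with rfl | ⟨i', rfl⟩
      · simp at hi
      · rcases Fin.eq_zero_or_eq_succ j with rfl | ⟨j', rfl⟩
        · simp at hj
        · have := h2 i' j' (by simpa using hi) (by simpa using hj)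
            (by simp only [Fin.val_succ] at hlt; omega)
          simp only [Fin.val_succ] at hlt ⊢
          omega

lemma mOk_cons_some {p g n : ℕ} {m : Bool} {v : Fin n → Option Bool} :
    mOk p g (Fin.cons (some m) v) ↔ g = 0 ∧ mOk p p v := by
  constructor
  · rintro ⟨h1, h2⟩
    refine ⟨?_, ?_, ?_⟩
    · have := h1 0 (by simp)
      simpa using this
    · intro i hi
      have := h2 0 i.succ (by simp) (by simpa using hi) (by simp)
      simp only [Fin.val_succ, Fin.val_zero] at this
      omega
    · intro i j hi hj hlt
      have := h2 i.succ j.succ (by simpa using hi) (by simpa using hj)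
        (by simp only [Fin.val_succ]; omega)
      simp only [Fin.val_succ] at this
      omega
  · rintro ⟨hg, hv1, hv2⟩
    subst hg
    constructor
    · intro i _
      exact Nat.zero_le _
    · intro i j hi hj hlt
      rcases Fin.eq_zero_or_eq_succ j with rfl | ⟨j', rfl⟩
      · simp at hlt
      · rcases Fin.eq_zero_or_eq_succ i with rfl | ⟨i', rfl⟩
        · have := hv1 j' (by simpa using hj)
          simp only [Fin.val_succ, Fin.val_zero]
          omega
        · have := hv2 i' j' (by simpa using hi) (by simpa using hj)
            (by simp only [Fin.val_succ] at hlt; omega)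
          simp only [Fin.val_succ]
          omega

lemma MN_zero (p g k : ℕ) : MN p g 0 k = if k = 0 then 1 else 0 := by
  rcases Nat.eq_zero_or_pos k with rfl | hk
  · rw [if_pos rfl, MN]
    haveI : Unique {v : Fin 0 → Option Bool // mOk p g v ∧ mct v = 0} :=
      { default := ⟨fun i => i.elim0, ⟨fun i => i.elim0, fun i => i.elim0⟩, by simp [mct]⟩
        uniq := by
          intro a
          apply Subtype.ext
          funext i
          exact i.elim0 }
    exact Nat.card_unique
  · rw [if_neg (by omega), MN]
    haveI : IsEmpty {v : Fin 0 → Option Bool // mOk p g v ∧ mct v = k} := by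
      constructor
      rintro ⟨v, -, hv⟩
      rw [mct] at hv
      simp at hv
      omega
    exact Nat.card_of_isEmpty

lemma natCard_subtype_false {α : Type*} {P : α → Prop} (h : ∀ a, ¬ P a) :
    Nat.card {a : α // P a} = 0 := by
  haveI : IsEmpty {a : α // P a} := ⟨fun x => h x.1 x.2⟩
  exact Nat.card_of_isEmpty

lemma natCard_cons_split (P : (Fin (n + 1) → Option Bool) → Prop) :
    Nat.card {v : Fin (n + 1) → Option Bool // P v} =
      Nat.card {w : Fin n → Option Bool // P (Fin.cons none w)} +
      Nat.card {w : Fin n → Option Bool // P (Fin.cons (some false) w)} +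
      Nat.card {w : Fin n → Option Bool // P (Fin.cons (some true) w)} := by
  have e : {v : Fin (n + 1) → Option Bool // P v} ≃
      Σ a : Option Bool, {w : Fin n → Option Bool // P (Fin.cons a w)} :=
    { toFun := fun x => ⟨x.1 0, Fin.tail x.1, by rw [Fin.cons_self_tail]; exact x.2⟩
      invFun := fun x => ⟨Fin.cons x.1 x.2.1, x.2.2⟩
      left_inv := fun x => Subtype.ext (Fin.cons_self_tail x.1)
      right_inv := fun x => rfl }
  rw [Nat.card_congr e]
  letI : ∀ a : Option Bool, Fintype {w : Fin n → Option Bool // P (Fin.cons a w)} :=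
    fun a => Fintype.ofFinite _
  rw [Nat.card_eq_fintype_card, Fintype.card_sigma, Fintype.sum_option, Fintype.sum_bool]
  rw [Nat.card_eq_fintype_card, Nat.card_eq_fintype_card, Nat.card_eq_fintype_card]
  omega

lemma MN_succ (p g n k : ℕ) :
    MN p g (n + 1) k =
      MN p (g - 1) n k +
        (if g = 0 then MN p p n k + (if k = 0 then 0 else MN p p n (k - 1)) else 0) := by
  rw [MN, natCard_cons_split]
  have hnone : Nat.card {w : Fin n → Option Bool //
      mOk p g (Fin.cons none w) ∧ mct (Fin.cons none w) = k} = MN p (g - 1) n k := by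
    rw [MN]
    apply Nat.card_congr
    apply Equiv.subtypeEquivRight
    intro w
    rw [mOk_cons_none, mct_cons]
    simp
  rw [hnone]
  rcases Nat.eq_zero_or_pos g with rfl | hg
  · rw [if_pos rfl]
    have hf : Nat.card {w : Fin n → Option Bool //
        mOk p 0 (Fin.cons (some false) w) ∧ mct (Fin.cons (some false) w) = k}
        = MN p p n k := by
      rw [MN]
      apply Nat.card_congr
      apply Equiv.subtypeEquivRight
      intro w
      rw [mOk_cons_some, mct_cons]
      simp
    rw [hf]
    rcases Nat.eq_zero_or_pos k with rfl | hk
    · rw [if_pos rfl]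
      have ht : Nat.card {w : Fin n → Option Bool //
          mOk p 0 (Fin.cons (some true) w) ∧ mct (Fin.cons (some true) w) = 0} = 0 := by
        apply natCard_subtype_false
        rintro w ⟨-, hw⟩
        rw [mct_cons] at hw
        simp at hw
      rw [ht]
      omega
    · rw [if_neg (by omega)]
      have ht : Nat.card {w : Fin n → Option Bool //
          mOk p 0 (Fin.cons (some true) w) ∧ mct (Fin.cons (some true) w) = k}
          = MN p p n (k - 1) := by
        rw [MN]
        apply Nat.card_congr
        apply Equiv.subtypeEquivRight
        intro w
        rw [mOk_cons_some, mct_cons]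
        simp
        intro
        omega
      rw [ht]
      omega
  · rw [if_neg (by omega)]
    have hf : Nat.card {w : Fin n → Option Bool //
        mOk p g (Fin.cons (some false) w) ∧ mct (Fin.cons (some false) w) = k} = 0 := by
      apply natCard_subtype_false
      rintro w ⟨hw, -⟩
      rw [mOk_cons_some] at hw
      omega
    have ht : Nat.card {w : Fin n → Option Bool //
        mOk p g (Fin.cons (some true) w) ∧ mct (Fin.cons (some true) w) = k} = 0 := by
      apply natCard_subtype_false
      rintro w ⟨hw, -⟩
      rw [mOk_cons_some] at hw
      omega
    rw [hf, ht]

lemma MN_eq_cntG (p : ℕ) : ∀ n g k, MN p g n k = cntG p g n k := by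
  intro n
  induction n with
  | zero => intro g k; rw [MN_zero, cntG]
  | succ n ih =>
    intro g k
    rw [MN_succ, cntG, ih, ih, ih]

def enc {n : ℕ} (b t : Fin n → Bool) : Fin n → Option Bool :=
  fun i => if t i = true then some (!(b i)) else none

def decB {n : ℕ} (v : Fin n → Option Bool) : Fin n → Bool :=
  fun i => decide (v i = some false)

def decT {n : ℕ} (v : Fin n → Option Bool) : Fin n → Bool :=
  fun i => (v i).isSome

lemma enc_ok {p n k : ℕ} {b t : Fin n → Bool} (hb : IsFibStr p b) (ht : IsFibStr p t)
    (hm : ∀ i, b i = true → t i = true)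
    (hk : (Finset.univ.filter fun i => b i ≠ t i).card = k) :
    mOk p 0 (enc b t) ∧ mct (enc b t) = k := by
  constructor
  · constructor
    · intro i _
      exact Nat.zero_le _
    · intro i j hi hj hlt
      simp only [enc] at hi hj
      have hti : t i = true := by
        by_contra h
        rw [if_neg h] at hi
        simp at hi
      have htj : t j = true := by
        by_contra h
        rw [if_neg h] at hj
        simp at hj
      exact ht i j hti htj hlt
  · rw [Finset.card_filter] at hk
    rw [mct, ← hk]
    apply Finset.sum_congr rfl
    intro i _
    simp only [enc]
    rcases Bool.eq_false_or_eq_true (t i) with hti | hti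
    · rcases Bool.eq_false_or_eq_true (b i) with hbi | hbi <;> simp [hti, hbi]
    · have hbi : b i = false := by
        rcases Bool.eq_false_or_eq_true (b i) with h | h
        · exact absurd (hm i h) (by rw [hti]; simp)
        · exact h
      simp [hti, hbi]

lemma dec_ok {p n k : ℕ} {v : Fin n → Option Bool} (hok : mOk p 0 v) (hct : mct v = k) :
    IsFibStr p (decB v) ∧ IsFibStr p (decT v) ∧
      (∀ i, decB v i = true → decT v i = true) ∧
      (Finset.univ.filter fun i => decB v i ≠ decT v i).card = k := by
  refine ⟨?_, ?_, ?_, ?_⟩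
  · intro i j hi hj hlt
    simp only [decB, decide_eq_true_eq] at hi hj
    exact hok.2 i j (by rw [hi]; rfl) (by rw [hj]; rfl) hlt
  · intro i j hi hj hlt
    exact hok.2 i j hi hj hlt
  · intro i hi
    simp only [decB, decide_eq_true_eq] at hi
    simp only [decT, hi]
    rfl
  · rw [Finset.card_filter, ← hct, mct]
    apply Finset.sum_congr rfl
    intro i _
    simp only [decB, decT]
    rcases Option.eq_none_or_eq_some (v i) with hvi | ⟨b, hvi⟩
    · simp [hvi]
    · rcases Bool.eq_false_or_eq_true b with rfl | rfl <;> simp [hvi]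

lemma dec_enc {n : ℕ} {b t : Fin n → Bool} (hm : ∀ i, b i = true → t i = true) :
    decB (enc b t) = b ∧ decT (enc b t) = t := by
  constructor
  · funext i
    simp only [decB, enc]
    rcases Bool.eq_false_or_eq_true (t i) with hti | hti
    · rcases Bool.eq_false_or_eq_true (b i) with hbi | hbi <;> simp [hti, hbi]
    · have hbi : b i = false := by
        rcases Bool.eq_false_or_eq_true (b i) with h | h
        · exact absurd (hm i h) (by rw [hti]; simp)
        · exact h
      simp [hti, hbi]
  · funext i
    simp only [decT, enc]
    rcases Bool.eq_false_or_eq_true (t i) with hti | hti <;> simp [hti]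

lemma enc_dec {n : ℕ} (v : Fin n → Option Bool) : enc (decB v) (decT v) = v := by
  funext i
  simp only [enc, decB, decT]
  rcases Option.eq_none_or_eq_some (v i) with hvi | ⟨b, hvi⟩
  · simp [hvi]
  · rcases Bool.eq_false_or_eq_true b with rfl | rfl <;> simp [hvi]

lemma cubeCount_eq_MN (p n k : ℕ) : cubeCount p n k = MN p 0 n k := by
  rw [cubeCount, MN]
  apply Nat.card_congr
  refine
    { toFun := fun x => ⟨enc x.1.1 x.1.2, enc_ok x.2.1 x.2.2.1 x.2.2.2.1 x.2.2.2.2⟩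
      invFun := fun y => ⟨(decB y.1, decT y.1), ?_⟩
      left_inv := ?_
      right_inv := ?_ }
  · obtain ⟨h1, h2, h3, h4⟩ := dec_ok y.2.1 y.2.2
    exact ⟨h1, h2, h3, h4⟩
  · rintro ⟨⟨b, t⟩, hb, ht, hm, hk⟩
    apply Subtype.ext
    obtain ⟨e1, e2⟩ := dec_enc hm
    simp only
    rw [e1, e2]
  · rintro ⟨v, hok, hct⟩
    apply Subtype.ext
    simp only
    exact enc_dec v

end FibConvAux

/-- `c_k(Γ^p_n)` equals the sum over `(k+1)`-tuples summing to `n - kp + p + 1` of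
products of Fibonacci `p`-numbers. -/
theorem cubeCount_eq_convolution (p n k : ℕ) (hp : 1 ≤ p) :
    cubeCount p n k =
      ∑ t ∈ Finset.Nat.antidiagonalTuple (k + 1) (n + p + 1 - k * p),
        ∏ j, fibP p (t j) := by
  rw [FibConvAux.cubeCount_eq_MN, FibConvAux.MN_eq_cntG,
    FibConvAux.cntG_eq hp n 0 k (Nat.zero_le p), Nat.sub_zero]
  rfl
end
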